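/- Let a, r be elements of a unital C*-algebra with r ≥ 0, 0 < q, and r·a = q·a·r. Then r^{1/2}·a = q^{1/2}·a·r^{1/2}. -/

import Mathlib

/-!
The element `a` intertwines the selfadjoint elements `r` and `q • r`: `r * a = a * (q • r)`.
The set of continuous `f` with `f r * a = a * f (q • r)` is a closed subalgebra of `C(K, ℝ)`, for
`K` a compact set containing both spectra, and it contains the identity, so by Stone–Weierstrass it
is everything. Taking `f = √` and using `√(q • r) = √q • √r` gives the claim.
-/

section Intertwining

variable {𝕜 A : Type*} {p : A → Prop} [RCLike 𝕜] [Ring A] [StarRing A] [Algebra 𝕜 A]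
  [TopologicalSpace A] [ContinuousFunctionalCalculus 𝕜 A p] [IsSemitopologicalRing A] [T2Space A]

theorem SemiconjBy.cfcHomSuperset {x a b : A} (ha : p a) (hb : p b) {s : Set 𝕜} [CompactSpace s]
    (has : spectrum 𝕜 a ⊆ s) (hbs : spectrum 𝕜 b ⊆ s) (h : SemiconjBy x a b)
    (h' : SemiconjBy x (star a) (star b)) (f : C(s, 𝕜)) :
    SemiconjBy x (_root_.cfcHomSuperset ha has f) (_root_.cfcHomSuperset hb hbs f) := by
  induction f using ContinuousMap.induction_on_of_compact with
  | const c =>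
    change SemiconjBy x (_root_.cfcHomSuperset ha has (algebraMap 𝕜 _ c))
      (_root_.cfcHomSuperset hb hbs (algebraMap 𝕜 _ c))
    simp only [AlgHomClass.commutes]
    exact (Algebra.commutes c x).symm
  | id => rwa [cfcHomSuperset_id, cfcHomSuperset_id]
  | star_id => rwa [map_star, map_star, cfcHomSuperset_id, cfcHomSuperset_id]
  | add f g hf hg => rw [map_add, map_add]; exact hf.add_right hg
  | mul f g hf hg => rw [map_mul, map_mul]; exact hf.mul_right hg
  | frequently f hf =>
    have hclosed : IsClosed {g : C(s, 𝕜) |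
        SemiconjBy x (_root_.cfcHomSuperset ha has g) (_root_.cfcHomSuperset hb hbs g)} :=
      isClosed_eq ((cfcHomSuperset_continuous ha has).const_mul x)
        ((cfcHomSuperset_continuous hb hbs).mul_const x)
    exact hclosed.closure_subset (mem_closure_iff_frequently.mpr hf)

theorem SemiconjBy.cfc {x a b : A} (h : SemiconjBy x a b) (h' : SemiconjBy x (star a) (star b))
    (f : 𝕜 → 𝕜) (hf : ContinuousOn f (spectrum 𝕜 a ∪ spectrum 𝕜 b) := by cfc_cont_tac)
    (ha : p a := by cfc_tac) (hb : p b := by cfc_tac) :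
    SemiconjBy x (cfc f a) (cfc f b) := by
  have : CompactSpace ↥(spectrum 𝕜 a ∪ spectrum 𝕜 b) := isCompact_iff_compactSpace.mp <|
    (ContinuousFunctionalCalculus.isCompact_spectrum a).union
      (ContinuousFunctionalCalculus.isCompact_spectrum b)
  convert h.cfcHomSuperset ha hb Set.subset_union_left Set.subset_union_right h'
    ⟨_, hf.domRestrict⟩ using 1
  · rw [cfc_apply f a ha (hf.mono Set.subset_union_left)]; rfl
  · rw [cfc_apply f b hb (hf.mono Set.subset_union_right)]; rfl

end Intertwining

namespace CFC

variable {A : Type*} [PartialOrder A] [Ring A] [StarRing A] [TopologicalSpace A] [Algebra ℝ A]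
  [StarOrderedRing A] [ContinuousFunctionalCalculus ℝ A IsSelfAdjoint] [NonnegSpectrumClass ℝ A]
  [IsSemitopologicalRing A] [T2Space A] [PosSMulMono ℝ A]

theorem sqrt_smul {c : ℝ} (hc : 0 ≤ c) (a : A) (ha : 0 ≤ a := by cfc_tac) :
    sqrt (c • a) = √c • sqrt a := by
  refine sqrt_unique ?_ (smul_nonneg (Real.sqrt_nonneg c) (sqrt_nonneg a))
  rw [smul_mul_smul, Real.mul_self_sqrt hc, sqrt_mul_sqrt_self a]

end CFC

theorem sqrt_q_commute
    {A : Type*} [CStarAlgebra A] [PartialOrder A] [StarOrderedRing A]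
    (q : ℝ) (hq : 0 < q) (r a : A) (hr : 0 ≤ r)
    (hcomm : r * a = (q : ℂ) • (a * r)) :
    CFC.sqrt r * a = ((Real.sqrt q : ℝ) : ℂ) • (a * CFC.sqrt r) := by
  have hr' : IsSelfAdjoint r := hr.isSelfAdjoint
  have hqr : SemiconjBy a (q • r) r := by
    rw [SemiconjBy, mul_smul_comm, hcomm, Complex.coe_smul]
  have hsqrt : SemiconjBy a (cfc Real.sqrt (q • r)) (cfc Real.sqrt r) :=
    hqr.cfc (by rwa [hr'.star_eq, (IsSelfAdjoint.all q |>.smul hr').star_eq]) Real.sqrt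
  rw [Complex.coe_smul, ← mul_smul_comm, ← CFC.sqrt_smul hq.le r,
    CFC.sqrt_eq_real_sqrt r, CFC.sqrt_eq_real_sqrt (q • r) (smul_nonneg hq.le hr),
    cfcₙ_eq_cfc, cfcₙ_eq_cfc]
  exact hsqrt.symm
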